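/- arXiv:math/0503743 — 5 statements merged into one kernel-verified Lean document; each statement's English description precedes it below -/
import Mathlib

section
/- Let G be a finite group, p a prime dividing |G|, and G_p a Sylow p-subgroup of G. Let m be an integer with p^m = [G_p : Z(G_p)]. If P is a p-centric subgroup of G contained in G_p (i.e., Z(P) is a Sylow p-subgroup of C_G(P)) and P is not a Sylow p-subgroup of G, then p^m does not divide [N_G(P) : P]. -/
/-- `H` is a Sylow `p`-subgroup of `K` (as subgroups of an ambient group `G`):
`H` is a `p`-subgroup of `K` maximal among `p`-subgroups of `K`. -/
def IsSylowIn {G : Type*} [Group G] (p : ℕ) (H K : Subgroup G) : Prop :=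
  H ≤ K ∧ IsPGroup p H ∧ ∀ Q : Subgroup G, Q ≤ K → IsPGroup p Q → H ≤ Q → Q = H

/-- `P` is `p`-centric in `G`: `P` is a `p`-group and `Z(P) = P ⊓ C_G(P)` is a
Sylow `p`-subgroup of the centralizer `C_G(P)`. -/
def IsPCentric {G : Type*} [Group G] (p : ℕ) (P : Subgroup G) : Prop :=
  IsPGroup p P ∧
    IsSylowIn p (P ⊓ Subgroup.centralizer (P : Set G)) (Subgroup.centralizer (P : Set G))

/-- `P` is principal `p`-radical in `G`: `P` is `p`-centric and
`N_G(P)/(P C_G(P))` has no non-trivial normal `p`-subgroup (stated without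
quotients: any `N_G(P)`-invariant subgroup `Q` with `P C_G(P) ≤ Q ≤ N_G(P)`
whose image mod `P C_G(P)` is a `p`-group equals `P C_G(P)`). -/
def IsPrincipalPRadical {G : Type*} [Group G] (p : ℕ) (P : Subgroup G) : Prop :=
  IsPCentric p P ∧ ∀ Q : Subgroup G,
    P ⊔ Subgroup.centralizer (P : Set G) ≤ Q → Q ≤ Subgroup.normalizer (P : Set G) →
    (∀ n ∈ Subgroup.normalizer (P : Set G), ∀ q ∈ Q, n * q * n⁻¹ ∈ Q) →
    (∀ q ∈ Q, ∃ k : ℕ, q ^ p ^ k ∈ P ⊔ Subgroup.centralizer (P : Set G)) →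
    Q = P ⊔ Subgroup.centralizer (P : Set G)

/-- A group has rank at most 2 at the prime `p`: it contains no elementary
abelian subgroup `(ℤ/p)^3`. -/
def NoRankThree (p : ℕ) (G : Type*) [Group G] : Prop :=
  ¬ ∃ f : Multiplicative (ZMod p × ZMod p × ZMod p) →* G, Function.Injective f

/-! `Z(G_p)` centralizes `P ≤ G_p`, and `G_p ∩ C_G(P)` is a `p`-subgroup of `C_G(P)` containing its
Sylow subgroup `P ∩ C_G(P)`, so `Z(G_p) ≤ G_p ∩ C_G(P) = P ∩ C_G(P) ≤ P`. If `p^m ∣ [N_G(P) : P]`,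
then `p^m |P|` divides `|G|`, hence `|G_p| = p^m |Z(G_p)|`, forcing `P = Z(G_p)`. But then `G_p`
centralizes `P`, so `G_p ≤ P ∩ C_G(P)` and `P = G_p` is Sylow. -/

section

open Subgroup

variable {G : Type*} [Group G] {p : ℕ}

theorem Subgroup.card_mul_relIndex {H K : Subgroup G} (h : H ≤ K) :
    Nat.card H * H.relIndex K = Nat.card K := by
  simpa only [relIndex_bot_left] using relIndex_mul_relIndex ⊥ H K bot_le h

theorem Subgroup.map_subtype_center_le_centralizer {P Q : Subgroup G} (h : P ≤ Q) :
    (center Q).map Q.subtype ≤ centralizer (P : Set G) := by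
  rintro _ ⟨z, hz, rfl⟩ g hg
  exact congrArg Subtype.val (mem_center_iff.mp hz ⟨g, h hg⟩)

theorem IsSylowIn.inf_eq_of_le {H K Q : Subgroup G} (hH : IsSylowIn p H K)
    (hQ : IsPGroup p Q) (hHQ : H ≤ Q) : Q ⊓ K = H :=
  hH.2.2 _ inf_le_right (hQ.to_le inf_le_left) (le_inf hHQ hH.1)

theorem IsPCentric.inf_centralizer_eq {P Q : Subgroup G} (hP : IsPCentric p P)
    (hQ : IsPGroup p Q) (hPQ : P ≤ Q) :
    Q ⊓ centralizer (P : Set G) = P ⊓ centralizer (P : Set G) :=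
  hP.2.inf_eq_of_le hQ (inf_le_left.trans hPQ)

theorem IsPCentric.map_subtype_center_le {P Q : Subgroup G} (hP : IsPCentric p P)
    (hQ : IsPGroup p Q) (hPQ : P ≤ Q) : (center Q).map Q.subtype ≤ P :=
  calc (center Q).map Q.subtype ≤ Q ⊓ centralizer (P : Set G) :=
        le_inf (map_subtype_le _) (map_subtype_center_le_centralizer hPQ)
    _ = P ⊓ centralizer (P : Set G) := hP.inf_centralizer_eq hQ hPQ
    _ ≤ P := inf_le_left

theorem IsPCentric.le_of_le_centralizer {P Q : Subgroup G} (hP : IsPCentric p P)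
    (hQ : IsPGroup p Q) (hPQ : P ≤ Q) (hQC : Q ≤ centralizer (P : Set G)) : Q ≤ P :=
  calc Q = Q ⊓ centralizer (P : Set G) := (inf_eq_left.mpr hQC).symm
    _ = P ⊓ centralizer (P : Set G) := hP.inf_centralizer_eq hQ hPQ
    _ ≤ P := inf_le_left

theorem Sylow.card_le_card_center_of_index_dvd [Finite G] [Fact p.Prime] (S : Sylow p G)
    {P K : Subgroup G} (hP : IsPGroup p P) (hPK : P ≤ K) (h : (center S).index ∣ P.relIndex K) :
    Nat.card P ≤ Nat.card (center S) := by
  obtain ⟨k, hk⟩ := IsPGroup.iff_card.mp hP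
  obtain ⟨m, hm⟩ := S.isPGroup'.index (center S)
  have hS : Nat.card S = p ^ m * Nat.card (center S) := by
    rw [← hm, mul_comm, card_mul_index]
  have hdvd : p ^ m * Nat.card P ∣ Nat.card S := by
    rw [hk, ← pow_add]
    refine S.pow_dvd_card_of_pow_dvd_card ?_
    calc p ^ (m + k) ∣ Nat.card P * P.relIndex K := by
          rw [pow_add, mul_comm, hk, ← hm]; exact mul_dvd_mul_left _ h
      _ = Nat.card K := card_mul_relIndex hPK
      _ ∣ Nat.card G := K.card_subgroup_dvd_card
  rw [hS] at hdvd
  exact Nat.le_of_dvd Nat.card_pos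
    (Nat.dvd_of_mul_dvd_mul_left (pow_pos (Fact.out : p.Prime).pos m) hdvd)

end

theorem stmt0_general {G : Type*} [Group G] [Fintype G] (p m : ℕ) [Fact p.Prime]
    (Gp : Sylow p G)
    (hm : p ^ m = (Subgroup.center ↥(Gp : Subgroup G)).index)
    (P : Subgroup G) (hle : P ≤ (Gp : Subgroup G)) (hcen : IsPCentric p P)
    (hns : ¬ ∃ S : Sylow p G, (S : Subgroup G) = P) :
    ¬ (p ^ m ∣ P.relIndex (Subgroup.normalizer (P : Set G))) := by
  intro hdvd
  set Z := (Subgroup.center Gp).map (Gp : Subgroup G).subtype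
  have hZP : Z ≤ P := hcen.map_subtype_center_le Gp.isPGroup' hle
  have hZ : Z = P := Subgroup.eq_of_le_of_card_ge hZP <| by
    rw [Subgroup.card_map_of_injective (Subgroup.subtype_injective _)]
    exact Gp.card_le_card_center_of_index_dvd hcen.1 Subgroup.le_normalizer (hm ▸ hdvd)
  have hGpC : (Gp : Subgroup G) ≤ Subgroup.centralizer (P : Set G) := by
    rw [← hZ, Subgroup.le_centralizer_iff]
    exact Subgroup.map_subtype_center_le_centralizer le_rfl
  exact hns ⟨Gp, le_antisymm (hcen.le_of_le_centralizer Gp.isPGroup' hle hGpC) hle⟩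

theorem stmt0 {G : Type*} [Group G] [Fintype G] (p m : ℕ) [Fact p.Prime]
    (hdvd : p ∣ Fintype.card G) (Gp : Sylow p G)
    (hm : p ^ m = (Subgroup.center ↥(Gp : Subgroup G)).index)
    (P : Subgroup G) (hle : P ≤ (Gp : Subgroup G)) (hcen : IsPCentric p P)
    (hns : ¬ ∃ S : Sylow p G, (S : Subgroup G) = P) :
    ¬ (p ^ m ∣ P.relIndex (Subgroup.normalizer (P : Set G))) :=
  stmt0_general p m Gp hm P hle hcen hns
end

section
/- Let G be a finite group, p a prime, and P a principal p-radical subgroup of G that is not a Sylow p-subgroup of G. If p divides [N_G(P):P] then, since Z(P) is a Sylow p-subgroup of C_G(P), p divides [N_G(P) : P C_G(P)]. -/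
theorem stmt4 {G : Type*} [Group G] [Fintype G] (p : ℕ) [Fact p.Prime]
    (P : Subgroup G) (hrad : IsPrincipalPRadical p P)
    (hns : ¬ ∃ S : Sylow p G, (S : Subgroup G) = P)
    (hdvd : p ∣ P.relIndex (Subgroup.normalizer (P : Set G))) :
    p ∣ (P ⊔ Subgroup.centralizer (P : Set G)).relIndex (Subgroup.normalizer (P : Set G)) := by
  classical
  obtain ⟨⟨hPp, hCle, hCpg, hCmax⟩, -⟩ := hrad
  set C : Subgroup G := Subgroup.centralizer (P : Set G) with hC
  -- the centralizer is contained in the normalizer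
  have hCN : C ≤ (Subgroup.normalizer (P : Set G)) := by
    intro g hg
    rw [Subgroup.mem_normalizer_iff]
    intro h
    constructor
    · intro hh
      have := (Subgroup.mem_centralizer_iff.mp hg) h hh
      have : g * h * g⁻¹ = h := by
        rw [← this]; group
      rwa [this]
    · intro hh
      have hmem : g * h * g⁻¹ ∈ P := hh
      have : h = g⁻¹ * (g * h * g⁻¹) * g := by group
      rw [this]
      have hginv : g⁻¹ ∈ C := inv_mem hg
      have := (Subgroup.mem_centralizer_iff.mp hginv) _ hmem
      have heq : g⁻¹ * (g * h * g⁻¹) * (g⁻¹)⁻¹ = g * h * g⁻¹ := by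
        rw [← this]; group
      rw [inv_inv] at heq
      rw [heq]; exact hmem
  have hPN : P ≤ (Subgroup.normalizer (P : Set G)) := Subgroup.le_normalizer
  have hsupN : P ⊔ C ≤ (Subgroup.normalizer (P : Set G)) := sup_le hPN hCN
  -- the Sylow subgroup of the centralizer
  let S : Subgroup C := (P ⊓ C).subgroupOf C
  have hSpg : IsPGroup p S := hCpg.comap_subtype
  let Syl : Sylow p C :=
    { toSubgroup := S
      isPGroup' := hSpg
      is_maximal' := by
        intro Q hQ hSQ
        have hmap : (P ⊓ C) ≤ Q.map C.subtype := by
          have := Subgroup.map_mono (f := C.subtype) hSQ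
          rwa [Subgroup.subgroupOf_map_subtype, inf_of_le_left hCle] at this
        have hQle : Q.map C.subtype ≤ C := by
          rintro x ⟨y, -, rfl⟩; exact y.2
        have := hCmax (Q.map C.subtype) hQle (hQ.map _) hmap
        have hinj : Function.Injective C.subtype := Subtype.coe_injective
        calc Q = (Q.map C.subtype).comap C.subtype :=
              (Subgroup.comap_map_eq_self_of_injective hinj Q).symm
          _ = S := by rw [this]; rfl }
  have hnotdvd : ¬ p ∣ (P ⊓ C).relIndex C := by
    have : (P ⊓ C).relIndex C = (Syl : Subgroup C).index := rfl
    rw [this]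
    exact Syl.not_dvd_index
  -- [P ⊔ C : P] = [C : P ⊓ C]
  have hkey : P.relIndex (P ⊔ C) = (P ⊓ C).relIndex C := by
    have h1 : P.relIndex (P ⊔ C) =
        (P.subgroupOf (Subgroup.normalizer (P : Set G))).relIndex ((P ⊔ C).subgroupOf (Subgroup.normalizer (P : Set G))) :=
      (Subgroup.relIndex_subgroupOf hsupN).symm
    have h2 : (P ⊔ C).subgroupOf (Subgroup.normalizer (P : Set G)) =
        P.subgroupOf (Subgroup.normalizer (P : Set G)) ⊔ C.subgroupOf (Subgroup.normalizer (P : Set G)) :=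
      Subgroup.subgroupOf_sup hPN hCN
    have h3 : (P.subgroupOf (Subgroup.normalizer (P : Set G))).relIndex
        (P.subgroupOf (Subgroup.normalizer (P : Set G)) ⊔ C.subgroupOf (Subgroup.normalizer (P : Set G)))
        = (P.subgroupOf (Subgroup.normalizer (P : Set G))).relIndex (C.subgroupOf (Subgroup.normalizer (P : Set G))) :=
      Subgroup.relIndex_sup_left (C.subgroupOf (Subgroup.normalizer (P : Set G))) (P.subgroupOf (Subgroup.normalizer (P : Set G)))
    have h4 : (P.subgroupOf (Subgroup.normalizer (P : Set G))).relIndex (C.subgroupOf (Subgroup.normalizer (P : Set G)))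
        = P.relIndex C := Subgroup.relIndex_subgroupOf hCN
    rw [h1, h2, h3, h4, ← Subgroup.inf_relIndex_right]
  have hmul : P.relIndex (P ⊔ C) * (P ⊔ C).relIndex (Subgroup.normalizer (P : Set G))
      = P.relIndex (Subgroup.normalizer (P : Set G)) :=
    Subgroup.relIndex_mul_relIndex _ _ _ le_sup_left hsupN
  rw [← hmul] at hdvd
  rcases (Fact.out : p.Prime).dvd_mul.mp hdvd with h | h
  · rw [hkey] at h; exact absurd h hnotdvd
  · exact h
end

section
/- If P is a proper generalized quaternion subgroup of a generalized quaternion group Q of order 2^n (n ≥ 4), then [N_Q(P) : P] = 2. -/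
open Finset in
theorem IsAddCyclic.card_nsmul_eq_zero {α : Type*} [AddGroup α] [Fintype α] [DecidableEq α]
    [IsAddCyclic α] {d : ℕ} (hd : d ∣ Fintype.card α) : #{x : α | d • x = 0} = d := by
  have hd0 : d ≠ 0 := by rintro rfl; simp at hd
  rw [← sum_card_addOrderOf_eq_card_nsmul_eq_zero hd0]
  exact (sum_congr rfl fun m hm => IsAddCyclic.card_addOrderOf_eq_totient
    ((Nat.dvd_of_mem_divisors hm).trans hd)).trans (Nat.sum_totient d)

namespace QuaternionGroup

variable {n : ℕ}

@[simp]
theorem inv_a (i : ZMod (2 * n)) : (a i)⁻¹ = a (-i) := rfl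

@[simp]
theorem inv_xa (i : ZMod (2 * n)) : (xa i)⁻¹ = xa ((n : ZMod (2 * n)) + i) := rfl

theorem a_pow (i : ZMod (2 * n)) (k : ℕ) : a i ^ k = a (k • i) := by
  induction k with
  | zero => rw [pow_zero, zero_nsmul, a_zero]
  | succ k ih => rw [pow_succ, ih, a_mul_a, succ_nsmul]

theorem two_mul_nsmul_natCast_self (e : ℕ) : (2 * e) • (n : ZMod (2 * n)) = 0 := by
  rw [nsmul_eq_mul, ← Nat.cast_mul, ZMod.natCast_eq_zero_iff]
  exact ⟨e, by ring⟩

theorem a_one_mul_xa_zero_ne (hn : 1 < n) : a 1 * xa 0 ≠ (xa 0 * a 1 : QuaternionGroup n) := by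
  have h2 : ((2 : ℕ) : ZMod (2 * n)) ≠ 0 := by
    rw [Ne, ZMod.natCast_eq_zero_iff]
    exact fun h => by have := Nat.le_of_dvd two_pos h; omega
  rw [a_mul_xa, xa_mul_a, Ne, xa.injEq, zero_sub, zero_add, neg_eq_iff_add_eq_zero,
    one_add_one_eq_two]
  exact_mod_cast h2

theorem exponent_eq_two_mul_of_two_dvd (hn : 2 ∣ n) :
    Monoid.exponent (QuaternionGroup n) = 2 * n := by
  rw [exponent]
  exact congrArg _ (Nat.lcm_eq_left hn)

theorem exists_xa_mem_of_mul_ne {P : Subgroup (QuaternionGroup n)} {x y : QuaternionGroup n}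
    (hx : x ∈ P) (hy : y ∈ P) (hxy : x * y ≠ y * x) : ∃ j, xa j ∈ P := by
  rcases x with i | i
  · rcases y with i' | i'
    · exact absurd (by rw [a_mul_a, a_mul_a, add_comm]) hxy
    · exact ⟨i', hy⟩
  · exact ⟨i, hx⟩

/-- For `e ∣ n`, the copy of `QuaternionGroup e` in `QuaternionGroup n` generated by
`a (n / e)` and `xa j`. -/
def quaternionSubgroup (e : ℕ) (j : ZMod (2 * n)) : Subgroup (QuaternionGroup n) where
  carrier := {g | match g with
    | a i => (2 * e) • i = 0
    | xa i => (2 * e) • (i - j) = 0}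
  one_mem' := nsmul_zero _
  mul_mem' := by
    have hn := two_mul_nsmul_natCast_self (n := n) e
    rintro (i | i) (i' | i') h h' <;>
      simp only [Set.mem_ofPred_eq, a_mul_a, a_mul_xa, xa_mul_a, xa_mul_xa] at h h' ⊢
    · linear_combination h + h'
    · linear_combination h' - h
    · linear_combination h + h'
    · linear_combination hn + h' - h
  inv_mem' := by
    have hn := two_mul_nsmul_natCast_self (n := n) e
    rintro (i | i) h <;> simp only [Set.mem_ofPred_eq, inv_a, inv_xa] at h ⊢
    · linear_combination -h
    · linear_combination hn + h

section quaternionSubgroup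

variable {e : ℕ} {j : ZMod (2 * n)}

@[simp]
theorem a_mem_quaternionSubgroup {i : ZMod (2 * n)} :
    a i ∈ quaternionSubgroup e j ↔ (2 * e) • i = 0 := Iff.rfl

@[simp]
theorem xa_mem_quaternionSubgroup {i : ZMod (2 * n)} :
    xa i ∈ quaternionSubgroup e j ↔ (2 * e) • (i - j) = 0 := Iff.rfl

def quaternionSubgroupEquivSum (e : ℕ) (j : ZMod (2 * n)) :
    quaternionSubgroup e j ≃ {i : ZMod (2 * n) // (2 * e) • i = 0} ⊕
      {i : ZMod (2 * n) // (2 * e) • (i - j) = 0} where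
  toFun
    | ⟨a i, h⟩ => .inl ⟨i, h⟩
    | ⟨xa i, h⟩ => .inr ⟨i, h⟩
  invFun
    | .inl i => ⟨a i, i.2⟩
    | .inr i => ⟨xa i, i.2⟩
  left_inv := by rintro ⟨i | i, h⟩ <;> rfl
  right_inv := by rintro (i | i) <;> rfl

theorem card_quaternionSubgroup [NeZero n] (he : e ∣ n) :
    Nat.card (quaternionSubgroup e j) = 4 * e := by
  have hrot : Nat.card {i : ZMod (2 * n) // (2 * e) • i = 0} = 2 * e := by
    rw [Nat.card_eq_fintype_card, Fintype.card_subtype,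
      IsAddCyclic.card_nsmul_eq_zero (by rw [ZMod.card]; exact mul_dvd_mul_left 2 he)]
  have hxa : Nat.card {i : ZMod (2 * n) // (2 * e) • (i - j) = 0} = 2 * e :=
    (Nat.card_congr ((Equiv.subRight j).subtypeEquiv fun _ => Iff.rfl)).trans hrot
  rw [Nat.card_congr (quaternionSubgroupEquivSum e j), Nat.card_sum, hrot, hxa]
  ring

theorem quaternionSubgroup_le_two_mul :
    quaternionSubgroup e j ≤ quaternionSubgroup (2 * e) j := by
  rintro (i | i) h <;> simp only [a_mem_quaternionSubgroup, xa_mem_quaternionSubgroup] at h ⊢ <;>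
    linear_combination 2 * h

theorem normalizer_quaternionSubgroup :
    Subgroup.normalizer (quaternionSubgroup e j : Set (QuaternionGroup n)) =
      quaternionSubgroup (2 * e) j := by
  have hn := two_mul_nsmul_natCast_self (n := n) e
  ext g
  rw [Subgroup.mem_normalizer_iff]
  constructor
  · intro hg
    have := (hg (xa j)).mp (by simp)
    rcases g with r | r <;>
      simp only [a_mul_xa, xa_mul_a, xa_mul_xa, inv_a, inv_xa, a_mem_quaternionSubgroup,
        xa_mem_quaternionSubgroup] at this ⊢
    · linear_combination -this
    · linear_combination this
  · intro hg x
    rcases g with r | r <;> rcases x with i | i <;>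
      simp only [a_mul_a, a_mul_xa, xa_mul_a, xa_mul_xa, inv_a, inv_xa, a_mem_quaternionSubgroup,
        xa_mem_quaternionSubgroup] at hg ⊢
    · constructor <;> intro h <;> linear_combination h
    · constructor <;> intro h
      · linear_combination h - hg
      · linear_combination h + hg
    · constructor <;> intro h <;> linear_combination 2 * hn - h
    · constructor <;> intro h <;> linear_combination hg - h

theorem relIndex_quaternionSubgroup_normalizer [NeZero n] (he : 2 * e ∣ n) :
    (quaternionSubgroup e j).relIndex
      (Subgroup.normalizer (quaternionSubgroup e j : Set (QuaternionGroup n))) = 2 := by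
  have he0 : e ≠ 0 := by rintro rfl; exact NeZero.ne n (zero_dvd_iff.mp he)
  have h := Subgroup.relIndex_mul_relIndex ⊥ _ _ bot_le
    (quaternionSubgroup_le_two_mul (e := e) (j := j))
  rw [Subgroup.relIndex_bot_left, Subgroup.relIndex_bot_left, card_quaternionSubgroup he,
    card_quaternionSubgroup (dvd_of_mul_left_dvd he)] at h
  rw [normalizer_quaternionSubgroup]
  exact Nat.eq_of_mul_eq_mul_left (by positivity) (h.trans (by ring) : 4 * e * _ = 4 * e * 2)

theorem le_quaternionSubgroup {P : Subgroup (QuaternionGroup n)} (hj : xa j ∈ P)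
    (hP : ∀ g ∈ P, g ^ (2 * e) = 1) : P ≤ quaternionSubgroup e j := by
  have ha : ∀ i, a i ∈ P → (2 * e) • i = 0 := fun i hi => by
    simpa only [a_pow, one_def, a.injEq] using hP _ hi
  rintro (i | i) hi
  · exact ha i hi
  · refine ha (i - j) ?_
    convert P.mul_mem (P.inv_mem hj) hi using 1
    rw [inv_xa, xa_mul_xa]
    ring_nf

end quaternionSubgroup

end QuaternionGroup

open QuaternionGroup

theorem stmt8_general (n : ℕ) (P : Subgroup (QuaternionGroup (2 ^ (n - 2))))
    (hP : P ≠ ⊤)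
    (hquat : ∃ m : ℕ, 3 ≤ m ∧ Nonempty (↥P ≃* QuaternionGroup (2 ^ (m - 2)))) :
    P.relIndex (Subgroup.normalizer (P : Set (QuaternionGroup (2 ^ (n - 2))))) = 2 := by
  obtain ⟨m, hm, ⟨φ⟩⟩ := hquat
  have hcard : Nat.card P = 4 * 2 ^ (m - 2) := by
    rw [Nat.card_congr φ.toEquiv, Nat.card_eq_fintype_card, QuaternionGroup.card]
  have hlt : m - 2 < n - 2 := by
    have hdvd := P.card_subgroup_dvd_card
    have hne := mt (Subgroup.card_eq_iff_eq_top P).mp hP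
    rw [hcard, Nat.card_eq_fintype_card, QuaternionGroup.card] at hdvd hne
    have hle := (Nat.pow_dvd_pow_iff_le_right one_lt_two).mp
      (Nat.dvd_of_mul_dvd_mul_left four_pos hdvd)
    exact lt_of_le_of_ne hle fun h => hne (by rw [h])
  have hexp : ∀ g ∈ P, g ^ (2 * 2 ^ (m - 2)) = 1 := fun g hg => by
    rw [← exponent_eq_two_mul_of_two_dvd (dvd_pow_self 2 (by omega)),
      ← Monoid.exponent_eq_of_mulEquiv φ]
    exact Subgroup.pow_exponent_eq_one hg
  obtain ⟨j, hj⟩ : ∃ j, xa j ∈ P := by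
    refine exists_xa_mem_of_mul_ne (φ.symm (a 1)).2 (φ.symm (xa 0)).2 fun h => ?_
    refine a_one_mul_xa_zero_ne (Nat.one_lt_two_pow (by omega)) (φ.symm.injective ?_)
    simpa only [map_mul] using Subtype.ext h
  have hPeq : P = quaternionSubgroup (2 ^ (m - 2)) j :=
    Subgroup.eq_of_le_of_card_ge (le_quaternionSubgroup hj hexp)
      (by rw [card_quaternionSubgroup (Nat.pow_dvd_pow 2 hlt.le), hcard])
  rw [hPeq]
  exact relIndex_quaternionSubgroup_normalizer (by rw [← pow_succ']; exact Nat.pow_dvd_pow 2 hlt)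

theorem stmt8 (n : ℕ) (hn : 4 ≤ n) (P : Subgroup (QuaternionGroup (2 ^ (n - 2))))
    (hP : P ≠ ⊤)
    (hquat : ∃ m : ℕ, 3 ≤ m ∧ Nonempty (↥P ≃* QuaternionGroup (2 ^ (m - 2)))) :
    P.relIndex (Subgroup.normalizer (P : Set (QuaternionGroup (2 ^ (n - 2))))) = 2 :=
  stmt8_general n P hP hquat
end

section
/- Let G be a finite group, p a prime, G_p a Sylow p-subgroup, and suppose P ⊆ G_p satisfies: P = G_p ∩ Q is a tame intersection for some Sylow p-subgroup Q of G (meaning N_{G_p}(P) and N_Q(P) are Sylow p-subgroups of N_G(P)), and C_{G_p}(P) ⊆ P. Then P is p-centric in G, i.e., Z(P) is a Sylow p-subgroup of C_G(P). -/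
/-! A `p`-subgroup `R` of `C_G(P)` containing `Z(P)` normalizes `P`, so some `N_G(P)`-conjugate
of it lies in the Sylow subgroup `G_p ∩ N_G(P)` of `N_G(P)`. That conjugate still centralizes `P`,
hence lies in `C_{G_p}(P) ⊆ P`, and conjugating back gives `R ≤ P`. -/

namespace IsSylowIn

variable {G : Type*} [Group G] {p : ℕ} {H K : Subgroup G}

def toSylow (hH : IsSylowIn p H K) : Sylow p K where
  toSubgroup := H.subgroupOf K
  isPGroup' := hH.2.1.of_equiv (Subgroup.subgroupOfEquivOfLe hH.1).symm
  is_maximal' {T} hT hHT := by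
    have hmap : T.map K.subtype = H := by
      refine hH.2.2 _ (Subgroup.map_subtype_le T) (hT.map _) ?_
      simpa only [Subgroup.subgroupOf_map_subtype, inf_eq_left.mpr hH.1]
        using Subgroup.map_mono (f := K.subtype) hHT
    rw [← hmap, ← Subgroup.comap_subtype,
      Subgroup.comap_map_eq_self_of_injective K.subtype_injective]

theorem exists_conj_mem [Fact p.Prime] [Finite (Sylow p G)] (hH : IsSylowIn p H K)
    {R : Subgroup G} (hRK : R ≤ K) (hR : IsPGroup p R) :
    ∃ x ∈ K, ∀ r ∈ R, x * r * x⁻¹ ∈ H := by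
  obtain ⟨T, hRT⟩ := (hR.of_equiv (Subgroup.subgroupOfEquivOfLe hRK).symm).exists_le_sylow
  obtain ⟨g, hg⟩ := MulAction.exists_smul_eq K T hH.toSylow
  refine ⟨g, g.2, fun r hr => ?_⟩
  have hmem : g * ⟨r, hRK hr⟩ * g⁻¹ ∈ (hH.toSylow : Subgroup K) := by
    rw [← hg, Sylow.smul_def, Sylow.pointwise_smul_def]
    exact Subgroup.smul_mem_pointwise_smul _ _ _ (hRT hr)
  exact hmem

end IsSylowIn

theorem isPCentric_of_isSylowIn_normalizer {G : Type*} [Group G] {p : ℕ} [Fact p.Prime]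
    [Finite (Sylow p G)] {P S : Subgroup G} (hP : IsPGroup p P)
    (hS : IsSylowIn p S (Subgroup.normalizer (P : Set G)))
    (hSC : S ⊓ Subgroup.centralizer (P : Set G) ≤ P) : IsPCentric p P := by
  refine ⟨hP, inf_le_right, hP.to_le inf_le_left, fun R hRC hR hZR => le_antisymm ?_ hZR⟩
  have hRN := hRC.trans (Subgroup.centralizer_le_normalizer _)
  obtain ⟨x, hxN, hconj⟩ := hS.exists_conj_mem hRN hR
  intro r hr
  have hconjC : x * r * x⁻¹ ∈ Subgroup.centralizer (P : Set G) :=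
    (Subgroup.normal_subgroupOf_iff (Subgroup.centralizer_le_normalizer _)).mp
      inferInstance r x (hRC hr) hxN
  exact ⟨(Subgroup.mem_normalizer_iff.mp hxN r).mpr (hSC ⟨hconj r hr, hconjC⟩), hRC hr⟩

theorem stmt15_general {G : Type*} [Group G] [Fintype G] (p : ℕ) [Fact p.Prime]
    (Gp Q : Sylow p G) (P : Subgroup G)
    (hP : P = (Gp : Subgroup G) ⊓ (Q : Subgroup G))
    (htame1 : IsSylowIn p ((Gp : Subgroup G) ⊓ Subgroup.normalizer (P : Set G)) (Subgroup.normalizer (P : Set G)))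
    (hcent : (Gp : Subgroup G) ⊓ Subgroup.centralizer (P : Set G) ≤ P) :
    IsPCentric p P := by
  have hPGp : P ≤ Gp := hP ▸ inf_le_left
  exact isPCentric_of_isSylowIn_normalizer (Gp.isPGroup'.to_le hPGp) htame1
    ((inf_le_inf_right _ inf_le_left).trans hcent)

theorem stmt15 {G : Type*} [Group G] [Fintype G] (p : ℕ) [Fact p.Prime]
    (Gp Q : Sylow p G) (P : Subgroup G)
    (hP : P = (Gp : Subgroup G) ⊓ (Q : Subgroup G))
    (htame1 : IsSylowIn p ((Gp : Subgroup G) ⊓ Subgroup.normalizer (P : Set G)) (Subgroup.normalizer (P : Set G)))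
    (htame2 : IsSylowIn p ((Q : Subgroup G) ⊓ Subgroup.normalizer (P : Set G)) (Subgroup.normalizer (P : Set G)))
    (hcent : (Gp : Subgroup G) ⊓ Subgroup.centralizer (P : Set G) ≤ P) :
    IsPCentric p P :=
  stmt15_general p Gp Q P hP htame1 hcent
end

section
/- Let G be a finite group, p a prime, and G_p a Sylow p-subgroup. Suppose χ: G_p → ℂ is a class function on G_p that 'respects fusion in G' (χ(a) = χ(b) whenever a, b ∈ G_p are conjugate in G). If F is a weak conjugation family for (G, G_p) consisting of pairs (H, N_G(H)) such that for each (H,N_G(H)) ∈ F the restriction χ|_H is invariant under N_G(H)-conjugation and χ is invariant under N_G(G_p)-conjugation, then χ is determined on G-conjugacy classes; conversely, if χ|_H respects fusion in N_G(H) for every (H, N_G(H)) in a weak conjugation family and χ respects fusion in N_G(G_p), then χ respects fusion in G. -/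
/-- `F` is a weak conjugation family for `(G, Gp)` with pairs `(H, N_G(H))` for
`H ∈ F`: whenever `A, B ⊆ Gp` with `B = g⁻¹ A g` for some `g ∈ G`, the
conjugation can be realized by a chain of conjugations by elements
`xᵢ ∈ N_G(Hᵢ)` with `Hᵢ ∈ F`, followed by an element `y ∈ N_G(Gp)`, with the
successive conjugates of `A` contained in the corresponding `Hᵢ`. -/
def IsWeakConjFamily {G : Type*} [Group G] (Gp : Subgroup G)
    (F : Set (Subgroup G)) : Prop :=
  (∀ H ∈ F, H ≤ Gp) ∧
  ∀ A B : Set G, A ⊆ (Gp : Set G) → B ⊆ (Gp : Set G) →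
    (∃ g : G, B = (fun a => g⁻¹ * a * g) '' A) →
    ∃ (l : List (Subgroup G × G)) (y : G),
      (∀ pr ∈ l, pr.1 ∈ F ∧ pr.2 ∈ Subgroup.normalizer (pr.1 : Set G)) ∧
      y ∈ Subgroup.normalizer (Gp : Set G) ∧
      B = (fun a => ((l.map Prod.snd).prod * y)⁻¹ * a * ((l.map Prod.snd).prod * y)) '' A ∧
      ∀ i (hi : i < l.length),
        (fun a => ((l.map Prod.snd).take i).prod⁻¹ * a * ((l.map Prod.snd).take i).prod) '' A
          ⊆ ((l.get ⟨i, hi⟩).1 : Set G)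

/-! Let `a, b ∈ G_p` with `b = g⁻¹ a g`. Applying the weak conjugation family to `A = {a}`,
`B = {b}` factors this conjugation as conjugations by `xᵢ ∈ N_G(Hᵢ)`, each applied to an
element of `Hᵢ`, followed by one by `y ∈ N_G(G_p)` applied to an element of `G_p`. The
hypotheses on `χ` say exactly that no link of this chain changes the value of `χ`. -/

section ConjugationChain

variable {G : Type*} [Group G]

theorem apply_conj_eq_of_mem_normalizer {α : Type*} {χ : G → α} {H : Subgroup G}
    (hH : ∀ a ∈ H, ∀ b ∈ H,
      (∃ g ∈ Subgroup.normalizer (H : Set G), g⁻¹ * a * g = b) → χ a = χ b)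
    {a x : G} (ha : a ∈ H) (hx : x ∈ Subgroup.normalizer (H : Set G)) :
    χ (x⁻¹ * a * x) = χ a :=
  (hH a ha _ ((Subgroup.mem_normalizer_iff''.mp hx a).mp ha) ⟨x, hx, rfl⟩).symm

theorem apply_conj_list_prod_eq {α : Type*} {χ : G → α} {F : Set (Subgroup G)}
    (hH : ∀ H ∈ F, ∀ a ∈ H, ∀ b ∈ H,
      (∃ g ∈ Subgroup.normalizer (H : Set G), g⁻¹ * a * g = b) → χ a = χ b) :
    ∀ (l : List (Subgroup G × G)) (a : G),
      (∀ pr ∈ l, pr.1 ∈ F ∧ pr.2 ∈ Subgroup.normalizer (pr.1 : Set G)) →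
      (∀ i (hi : i < l.length),
        ((l.map Prod.snd).take i).prod⁻¹ * a * ((l.map Prod.snd).take i).prod ∈ l[i].1) →
      χ ((l.map Prod.snd).prod⁻¹ * a * (l.map Prod.snd).prod) = χ a
  | [], _, _, _ => by simp
  | (H, x) :: l, a, hl, hchain => by
    obtain ⟨hHF, hx⟩ := hl (H, x) List.mem_cons_self
    have haH : a ∈ H := by
      have h0 := hchain 0 (by simp)
      simp only [List.take_zero, List.prod_nil, inv_one, one_mul, mul_one] at h0
      exact h0
    have htail := apply_conj_list_prod_eq hH l (x⁻¹ * a * x)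
      (fun pr hpr => hl pr (List.mem_cons_of_mem _ hpr))
      (fun i hi => by
        have hi' := hchain (i + 1) (by simpa using hi)
        simp only [List.map_cons, List.take_succ_cons, List.prod_cons, mul_inv_rev, mul_assoc] at hi'
        simp only [mul_assoc]
        exact hi')
    calc χ ((((H, x) :: l).map Prod.snd).prod⁻¹ * a * (((H, x) :: l).map Prod.snd).prod)
        = χ ((l.map Prod.snd).prod⁻¹ * (x⁻¹ * a * x) * (l.map Prod.snd).prod) := by
          simp [mul_assoc]
      _ = χ (x⁻¹ * a * x) := htail
      _ = χ a := apply_conj_eq_of_mem_normalizer (hH H hHF) haH hx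

theorem IsWeakConjFamily.exists_chain_of_conj {Gp : Subgroup G} {F : Set (Subgroup G)}
    (hF : IsWeakConjFamily Gp F) {a b g : G} (ha : a ∈ Gp)
    (hb : b ∈ Gp) (hg : g⁻¹ * a * g = b) :
    ∃ (l : List (Subgroup G × G)) (y : G),
      (∀ pr ∈ l, pr.1 ∈ F ∧ pr.2 ∈ Subgroup.normalizer (pr.1 : Set G)) ∧
      y ∈ Subgroup.normalizer (Gp : Set G) ∧
      y⁻¹ * ((l.map Prod.snd).prod⁻¹ * a * (l.map Prod.snd).prod) * y = b ∧
      ∀ i (hi : i < l.length),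
        ((l.map Prod.snd).take i).prod⁻¹ * a * ((l.map Prod.snd).take i).prod ∈ l[i].1 := by
  obtain ⟨l, y, hl, hy, hab, hchain⟩ := hF.2 {a} {b} (Set.singleton_subset_iff.mpr ha)
    (Set.singleton_subset_iff.mpr hb) ⟨g, by rw [Set.image_singleton, hg]⟩
  rw [Set.image_singleton, Set.singleton_eq_singleton_iff] at hab
  refine ⟨l, y, hl, hy, by rw [hab]; group, fun i hi => ?_⟩
  simpa only [Set.image_singleton, Set.singleton_subset_iff, SetLike.mem_coe, List.get_eq_getElem]
    using hchain i hi

end ConjugationChain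

theorem stmt16_general {G : Type*} [Group G] (p : ℕ)
    (Gp : Sylow p G) (F : Set (Subgroup G))
    (hF : IsWeakConjFamily (Gp : Subgroup G) F)
    (χ : G → ℂ)
    (hH : ∀ H ∈ F, ∀ a ∈ H, ∀ b ∈ H,
      (∃ g ∈ Subgroup.normalizer (H : Set G), g⁻¹ * a * g = b) → χ a = χ b)
    (hGp : ∀ a ∈ (Gp : Subgroup G), ∀ b ∈ (Gp : Subgroup G),
      (∃ g ∈ Subgroup.normalizer ((Gp : Subgroup G) : Set G), g⁻¹ * a * g = b) → χ a = χ b) :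
    ∀ a ∈ (Gp : Subgroup G), ∀ b ∈ (Gp : Subgroup G),
      (∃ g : G, g⁻¹ * a * g = b) → χ a = χ b := by
  rintro a ha b hb ⟨g, hg⟩
  obtain ⟨l, y, hl, hy, hyb, hchain⟩ := hF.exists_chain_of_conj ha hb hg
  set c := (l.map Prod.snd).prod⁻¹ * a * (l.map Prod.snd).prod
  have hc : c ∈ (Gp : Subgroup G) := (Subgroup.mem_normalizer_iff''.mp hy c).mpr (hyb ▸ hb)
  calc χ a = χ c := (apply_conj_list_prod_eq hH l a hl hchain).symm
    _ = χ b := hGp c hc b hb ⟨y, hy, hyb⟩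

theorem stmt16 {G : Type*} [Group G] [Fintype G] (p : ℕ) [Fact p.Prime]
    (Gp : Sylow p G) (F : Set (Subgroup G))
    (hF : IsWeakConjFamily (Gp : Subgroup G) F)
    (χ : G → ℂ)
    (hH : ∀ H ∈ F, ∀ a ∈ H, ∀ b ∈ H,
      (∃ g ∈ Subgroup.normalizer (H : Set G), g⁻¹ * a * g = b) → χ a = χ b)
    (hGp : ∀ a ∈ (Gp : Subgroup G), ∀ b ∈ (Gp : Subgroup G),
      (∃ g ∈ Subgroup.normalizer ((Gp : Subgroup G) : Set G), g⁻¹ * a * g = b) → χ a = χ b) :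
    ∀ a ∈ (Gp : Subgroup G), ∀ b ∈ (Gp : Subgroup G),
      (∃ g : G, g⁻¹ * a * g = b) → χ a = χ b :=
  stmt16_general p Gp F hF χ hH hGp
end
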